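/- Let 0 < r < s and 0 < θ < π. Let P = (r·cos(θ/2), r·sin(θ/2)) and Q = (r·cos(θ/2), −r·sin(θ/2)), two points of B at equal Euclidean distance r from the origin with angular separation θ, and set D = (r + s²/r)/(2·cos(θ/2)) (note D > s). Then the minimum over t ∈ [0,1] of ‖exp_P(t·log_P(Q))‖ — the smallest Euclidean distance from the origin to a point of the geodesic segment joining P and Q — equals D − √(D² − s²). -/

import Mathlib

noncomputable section

open Real MeasureTheory Set
open scoped InnerProductSpace ENNReal NNReal Classical

/-- Points of the plane `ℝ²`, with the Euclidean inner product and norm. -/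
abbrev Pt : Type := EuclideanSpace ℝ (Fin 2)

namespace HypFL

/-- Inverse hyperbolic tangent. -/
def artanh (x : ℝ) : ℝ := (1 / 2) * Real.log ((1 + x) / (1 - x))

/-- The Poincaré disc `B = {x : k‖x‖² < 1}` of curvature `-k`. -/
def disc (k : ℝ) : Set Pt := {x : Pt | k * ‖x‖ ^ 2 < 1}

/-- Möbius addition on the Poincaré disc. -/
def mAdd (k : ℝ) (x y : Pt) : Pt :=
  (1 + 2 * k * ⟪x, y⟫_ℝ + k ^ 2 * ‖x‖ ^ 2 * ‖y‖ ^ 2)⁻¹ •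
    ((1 + 2 * k * ⟪x, y⟫_ℝ + k * ‖y‖ ^ 2) • x + (1 - k * ‖x‖ ^ 2) • y)

/-- Hyperbolic distance on the Poincaré disc. -/
def hdist (k : ℝ) (x y : Pt) : ℝ :=
  (2 / Real.sqrt k) * artanh (Real.sqrt k * ‖mAdd k (-x) y‖)

/-- Logarithmic map at `p`. -/
def logMap (k : ℝ) (p x : Pt) : Pt :=
  if x = p then 0
  else ((((1 - k * ‖p‖ ^ 2) / Real.sqrt k) * artanh (Real.sqrt k * ‖mAdd k (-p) x‖))
      / ‖mAdd k (-p) x‖) • mAdd k (-p) x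

/-- Exponential map at `p`. -/
def expMap (k : ℝ) (p v : Pt) : Pt :=
  if v = 0 then p
  else mAdd k p ((Real.tanh (Real.sqrt k * ‖v‖ / (1 - k * ‖p‖ ^ 2)) / (Real.sqrt k * ‖v‖)) • v)

/-- The geodesic segment `[x, y] = {exp_x (t • log_x y) : t ∈ [0,1]}`. -/
def geoSeg (k : ℝ) (x y : Pt) : Set Pt :=
  (fun t : ℝ => expMap k x (t • logMap k x y)) '' Set.Icc (0 : ℝ) 1

/-- A set is geodesically convex if it contains the geodesic segment between any two
of its points. -/
def GConvex (k : ℝ) (S : Set Pt) : Prop := ∀ x ∈ S, ∀ y ∈ S, geoSeg k x y ⊆ S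

/-- The geodesic convex hull of `D`: the intersection of all geodesically convex subsets
of the Poincaré disc containing `D`. -/
def gconv (k : ℝ) (D : Set Pt) : Set Pt :=
  ⋂₀ {S : Set Pt | S ⊆ disc k ∧ GConvex k S ∧ D ⊆ S}

/-- The set of extreme points of a (finite) set `D`: points `z ∈ D` with
`z ∉ gconv (D \ {z})`. -/
def extremePts (k : ℝ) (D : Set Pt) : Set Pt := {z ∈ D | z ∉ gconv k (D \ {z})}

/-- The `CCW` predicate of the Poincaré Graham scan. -/
def ccw (k : ℝ) (x t z : Pt) : ℝ :=
  (‖logMap k x t‖⁻¹ • logMap k x t) 0 * (‖logMap k x z‖⁻¹ • logMap k x z) 1 -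
    (‖logMap k x t‖⁻¹ • logMap k x t) 1 * (‖logMap k x z‖⁻¹ • logMap k x z) 0

/-- `s = 1/√k`. -/
def sOf (k : ℝ) : ℝ := 1 / Real.sqrt k

end HypFL

namespace HypFL

/-- The polar angle of a nonzero point of `ℝ²`, normalized to lie in `(0, 2π]`. -/
def polarAngle (x : Pt) : ℝ :=
  if 0 < Complex.arg ((x 0 : ℂ) + (x 1 : ℂ) * Complex.I) then
    Complex.arg ((x 0 : ℂ) + (x 1 : ℂ) * Complex.I)
  else Complex.arg ((x 0 : ℂ) + (x 1 : ℂ) * Complex.I) + 2 * π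

/-- The point of `ℝ²` with Euclidean radius `r` and polar angle `θ`. -/
def ptPolar (r θ : ℝ) : Pt := WithLp.toLp 2 ![r * Real.cos θ, r * Real.sin θ]

/-- The hyperbolic radius `R_H = s ln((s+R)/(s−R))` corresponding to Euclidean radius `R`. -/
def RH (k R : ℝ) : ℝ := sOf k * Real.log ((sOf k + R) / (sOf k - R))

/-- Number of angular quantization bins: `N_Θ = ⌈4πs sinh(R_H/s)/ε⌉`. -/
def NTheta (k R ε : ℝ) : ℕ := ⌈4 * π * sOf k * Real.sinh (RH k R / sOf k) / ε⌉₊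

/-- Number of radial quantization bins: `N_R = ⌈2R_H/ε⌉`. -/
def NRad (k R ε : ℝ) : ℕ := ⌈2 * RH k R / ε⌉₊

/-- The quantization bin `B(n₁, n₂)`: points whose polar angle lies in
`((n₁−1)·2π/N_Θ, n₁·2π/N_Θ]` and whose hyperbolic distance to the origin lies in
`((n₂−1)·R_H/N_R, n₂·R_H/N_R]`. -/
def qbin (k R ε : ℝ) (n₁ n₂ : ℕ) : Set Pt :=
  {x : Pt |
    polarAngle x ∈ Set.Ioc (((n₁ : ℝ) - 1) * (2 * π / NTheta k R ε))
      ((n₁ : ℝ) * (2 * π / NTheta k R ε)) ∧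
    hdist k 0 x ∈ Set.Ioc (((n₂ : ℝ) - 1) * (RH k R / NRad k R ε))
      ((n₂ : ℝ) * (RH k R / NRad k R ε))}

/-- The Euclidean radius corresponding to hyperbolic radius `h`:
`s(e^{h/s} − 1)/(e^{h/s} + 1)`. -/
def eucOfHyp (k h : ℝ) : ℝ :=
  sOf k * (Real.exp (h / sOf k) - 1) / (Real.exp (h / sOf k) + 1)

/-- The `ε`-Poincaré quantization map `PQ_ε`: each point of the bin `B(n₁, n₂)` is sent to
the bin center, namely the point with polar angle `(n₁ − 1/2)·2π/N_Θ` and hyperbolic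
distance `(n₂ − 1/2)·R_H/N_R` from the origin; the origin is fixed. -/
def PQ (k R ε : ℝ) (x : Pt) : Pt :=
  if x = 0 then 0
  else
    ptPolar
      (eucOfHyp k
        (((⌈hdist k 0 x / (RH k R / NRad k R ε)⌉₊ : ℝ) - 1 / 2) * (RH k R / NRad k R ε)))
      (((⌈polarAngle x / (2 * π / NTheta k R ε)⌉₊ : ℝ) - 1 / 2) * (2 * π / NTheta k R ε))

end HypFL

/-!
The geodesic through `P` and `Q` lies on the circle centred at `c = (D, 0)` that meets the
boundary `‖z‖ = s` orthogonally, i.e. `‖z‖² + s² = 2⟪z, c⟫`: along the curve `μ ↦ P ⊕ μ • w`,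
`w = (-P) ⊕ Q`, the defect from this circle, cleared of denominators, is a quadratic in `μ`
whose constant and leading coefficients vanish since `P` is on the circle, and which vanishes at
`μ = 1` since `P ⊕ w = Q` is on it. On the circle `‖z‖ ≥ ‖c‖ - ‖c - z‖ = D - √(D² - s²)`, with
equality where the geodesic crosses the axis `y = 0`, which it does by the intermediate value
theorem.
-/

namespace HypFL

lemma norm_smul_add_smul_sq {E : Type*} [NormedAddCommGroup E] [InnerProductSpace ℝ E]
    (a b : ℝ) (x y : E) :
    ‖a • x + b • y‖ ^ 2 = a ^ 2 * ‖x‖ ^ 2 + 2 * (a * b) * ⟪x, y⟫_ℝ + b ^ 2 * ‖y‖ ^ 2 := by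
  rw [norm_add_sq_real, real_inner_smul_left, real_inner_smul_right, norm_smul, norm_smul,
    mul_pow, mul_pow, Real.norm_eq_abs, Real.norm_eq_abs, sq_abs, sq_abs]
  ring

section Mobius

variable {k : ℝ} {x y : Pt}

lemma mem_disc_iff_norm_lt (hk : 0 < k) : x ∈ disc k ↔ ‖x‖ < sOf k := by
  have hs : 0 ≤ sOf k := by unfold sOf; positivity
  rw [← sq_lt_sq₀ (norm_nonneg x) hs, sOf, div_pow, one_pow, Real.sq_sqrt hk.le,
    lt_div_iff₀ hk, mul_comm]
  rfl

@[simp]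
lemma neg_mem_disc : -x ∈ disc k ↔ x ∈ disc k := by
  simp [disc]

lemma mAdd_zero (k : ℝ) (x : Pt) : mAdd k x 0 = x := by
  simp [mAdd]

lemma mAdd_denom_pos (hk : 0 ≤ k) (hx : x ∈ disc k) (hy : y ∈ disc k) :
    0 < 1 + 2 * k * ⟪x, y⟫_ℝ + k ^ 2 * ‖x‖ ^ 2 * ‖y‖ ^ 2 := by
  have hx' : k * ‖x‖ ^ 2 < 1 := hx
  have hy' : k * ‖y‖ ^ 2 < 1 := hy
  have hxy : k * (‖x‖ * ‖y‖) < 1 := by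
    nlinarith [mul_nonneg hk (sq_nonneg (‖x‖ - ‖y‖))]
  have hinner : 0 ≤ k * (⟪x, y⟫_ℝ + ‖x‖ * ‖y‖) :=
    mul_nonneg hk (by linarith [neg_le_of_abs_le (abs_real_inner_le_norm x y)])
  nlinarith [pow_pos (sub_pos.2 hxy) 2]

lemma norm_mAdd_sq_mul (k : ℝ) (x y : Pt)
    (hd : 1 + 2 * k * ⟪x, y⟫_ℝ + k ^ 2 * ‖x‖ ^ 2 * ‖y‖ ^ 2 ≠ 0) :
    ‖mAdd k x y‖ ^ 2 * (1 + 2 * k * ⟪x, y⟫_ℝ + k ^ 2 * ‖x‖ ^ 2 * ‖y‖ ^ 2) = ‖x + y‖ ^ 2 := by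
  rw [mAdd, norm_smul, mul_pow, norm_inv, Real.norm_eq_abs, inv_pow, sq_abs,
    norm_smul_add_smul_sq, norm_add_sq_real]
  field_simp
  ring

lemma inner_mAdd_mul (k : ℝ) (x y c : Pt)
    (hd : 1 + 2 * k * ⟪x, y⟫_ℝ + k ^ 2 * ‖x‖ ^ 2 * ‖y‖ ^ 2 ≠ 0) :
    ⟪mAdd k x y, c⟫_ℝ * (1 + 2 * k * ⟪x, y⟫_ℝ + k ^ 2 * ‖x‖ ^ 2 * ‖y‖ ^ 2) =
      (1 + 2 * k * ⟪x, y⟫_ℝ + k * ‖y‖ ^ 2) * ⟪x, c⟫_ℝ + (1 - k * ‖x‖ ^ 2) * ⟪y, c⟫_ℝ := by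
  rw [mAdd, real_inner_smul_left, inner_add_left, real_inner_smul_left, real_inner_smul_left]
  field_simp

lemma mAdd_mem_disc (hk : 0 ≤ k) (hx : x ∈ disc k) (hy : y ∈ disc k) :
    mAdd k x y ∈ disc k := by
  have hd := mAdd_denom_pos hk hx hy
  have hnorm := norm_mAdd_sq_mul k x y hd.ne'
  rw [norm_add_sq_real] at hnorm
  have hxy : 0 < (1 - k * ‖x‖ ^ 2) * (1 - k * ‖y‖ ^ 2) :=
    mul_pos (sub_pos.2 hx) (sub_pos.2 hy)
  show k * ‖mAdd k x y‖ ^ 2 < 1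
  refine lt_of_mul_lt_mul_right ?_ hd.le
  linear_combination k * hnorm + hxy

lemma mAdd_neg_left_cancel (hk : 0 ≤ k) (hx : x ∈ disc k) (hy : y ∈ disc k) :
    mAdd k x (mAdd k (-x) y) = y := by
  have hδ := mAdd_denom_pos hk (neg_mem_disc.2 hx) hy
  have hA : 1 - k * ‖x‖ ^ 2 ≠ 0 := (sub_pos.2 hx).ne'
  have hnorm := norm_mAdd_sq_mul k (-x) y hδ.ne'
  have hinner := inner_mAdd_mul k (-x) y x hδ.ne'
  have hw : mAdd k (-x) y = (1 + 2 * k * -⟪x, y⟫_ℝ + k ^ 2 * ‖x‖ ^ 2 * ‖y‖ ^ 2)⁻¹ •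
      ((1 + 2 * k * -⟪x, y⟫_ℝ + k * ‖y‖ ^ 2) • -x + (1 - k * ‖x‖ ^ 2) • y) := by
    rw [mAdd, inner_neg_left, norm_neg]
  simp only [inner_neg_left, norm_neg, real_inner_self_eq_norm_sq] at hδ hnorm hinner
  rw [neg_add_eq_sub, norm_sub_sq_real, real_inner_comm x y] at hnorm
  rw [real_inner_comm x y, real_inner_comm x] at hinner
  rw [mAdd]
  generalize ⟪x, mAdd k (-x) y⟫_ℝ = p at hinner ⊢
  generalize ‖mAdd k (-x) y‖ = n at hnorm ⊢
  rw [hw]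
  set δ := 1 + 2 * k * -⟪x, y⟫_ℝ + k ^ 2 * ‖x‖ ^ 2 * ‖y‖ ^ 2
  have hcoeff : (1 + 2 * k * p + k * n ^ 2) * δ =
      (1 - k * ‖x‖ ^ 2) * (1 + 2 * k * -⟪x, y⟫_ℝ + k * ‖y‖ ^ 2) := by
    linear_combination (2 * k) * hinner + k * hnorm
  have hdenom : (1 + 2 * k * p + k ^ 2 * ‖x‖ ^ 2 * n ^ 2) * δ = (1 - k * ‖x‖ ^ 2) ^ 2 := by
    linear_combination (2 * k) * hinner + k ^ 2 * ‖x‖ ^ 2 * hnorm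
  have hδ0 : δ ≠ 0 := hδ.ne'
  have hd0 : 1 + 2 * k * p + k ^ 2 * ‖x‖ ^ 2 * n ^ 2 ≠ 0 :=
    left_ne_zero_of_mul (hdenom ▸ pow_ne_zero 2 hA)
  match_scalars
  · field_simp
    linear_combination hcoeff
  · field_simp
    exact hdenom.symm

lemma continuousOn_mAdd (hk : 0 ≤ k) (hx : x ∈ disc k) : ContinuousOn (mAdd k x) (disc k) := by
  unfold mAdd
  exact ContinuousOn.smul (ContinuousOn.inv₀ (by fun_prop) fun y hy ↦
    (mAdd_denom_pos hk hx hy).ne') (by fun_prop)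

end Mobius

/-- The circle with centre `c` and radius `√(‖c‖² - s²)`, which meets the sphere `‖z‖ = s`
orthogonally. -/
def orthoCircle {E : Type*} [NormedAddCommGroup E] [InnerProductSpace ℝ E] (s : ℝ) (c : E) :
    Set E :=
  {z | ‖z‖ ^ 2 + s ^ 2 = 2 * ⟪z, c⟫_ℝ}

section OrthoCircle

variable {E : Type*} [NormedAddCommGroup E] [InnerProductSpace ℝ E] {s : ℝ} {c z : E}

lemma sqrt_sub_eq_norm_sub_of_mem_orthoCircle (hz : z ∈ orthoCircle s c) :
    √(‖c‖ ^ 2 - s ^ 2) = ‖c - z‖ := by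
  have hz' : ‖z‖ ^ 2 + s ^ 2 = 2 * ⟪z, c⟫_ℝ := hz
  rw [← Real.sqrt_sq (norm_nonneg (c - z)), norm_sub_sq_real, real_inner_comm]
  congr 1
  linarith

lemma norm_sub_sqrt_le_norm_of_mem_orthoCircle (hz : z ∈ orthoCircle s c) :
    ‖c‖ - √(‖c‖ ^ 2 - s ^ 2) ≤ ‖z‖ := by
  rw [sqrt_sub_eq_norm_sub_of_mem_orthoCircle hz, sub_le_iff_le_add]
  exact norm_le_insert' c z

lemma norm_eq_of_mem_orthoCircle_of_sameRay (hz : z ∈ orthoCircle s c)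
    (hray : SameRay ℝ z (c - z)) : ‖z‖ = ‖c‖ - √(‖c‖ ^ 2 - s ^ 2) := by
  have h := hray.norm_add
  rw [add_sub_cancel] at h
  rw [sqrt_sub_eq_norm_sub_of_mem_orthoCircle hz, h, add_sub_cancel_right]

end OrthoCircle

theorem mAdd_smul_mem_orthoCircle {k s : ℝ} (hk : 0 ≤ k) (hks : k * s ^ 2 = 1) {a u c : Pt}
    (ha : a ∈ disc k) (hu : u ∈ disc k) (haC : a ∈ orthoCircle s c)
    (hauC : mAdd k a u ∈ orthoCircle s c) {μ : ℝ} (hμu : μ • u ∈ disc k) :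
    mAdd k a (μ • u) ∈ orthoCircle s c := by
  have haC' : ‖a‖ ^ 2 + s ^ 2 = 2 * ⟪a, c⟫_ℝ := haC
  obtain ⟨L, hL⟩ : ∃ L : ℝ, ∀ μ : ℝ, μ • u ∈ disc k →
      (‖mAdd k a (μ • u)‖ ^ 2 + s ^ 2 - 2 * ⟪mAdd k a (μ • u), c⟫_ℝ) *
        (1 + 2 * k * ⟪a, μ • u⟫_ℝ + k ^ 2 * ‖a‖ ^ 2 * ‖μ • u‖ ^ 2) = μ * L := by
    refine ⟨4 * ⟪a, u⟫_ℝ * (1 - k * ⟪a, c⟫_ℝ) - 2 * (1 - k * ‖a‖ ^ 2) * ⟪u, c⟫_ℝ,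
      fun μ hμ ↦ ?_⟩
    have hd := (mAdd_denom_pos hk ha hμ).ne'
    have hnorm := norm_mAdd_sq_mul k a (μ • u) hd
    have hinner := inner_mAdd_mul k a (μ • u) c hd
    rw [norm_add_sq_real] at hnorm
    simp only [real_inner_smul_right, real_inner_smul_left, norm_smul, Real.norm_eq_abs, mul_pow,
      sq_abs] at hnorm hinner ⊢
    linear_combination hnorm - 2 * hinner + (1 + k * μ ^ 2 * ‖u‖ ^ 2) * haC'
      + (μ ^ 2 * ‖u‖ ^ 2 * (k * ‖a‖ ^ 2 - 1) + 2 * μ * ⟪a, u⟫_ℝ) * hks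
  have hL0 : L = 0 := by
    have hauC' : ‖mAdd k a u‖ ^ 2 + s ^ 2 = 2 * ⟪mAdd k a u, c⟫_ℝ := hauC
    have h1 := hL 1 (by rwa [one_smul])
    rw [one_smul, hauC', sub_self, zero_mul, one_mul] at h1
    exact h1.symm
  have hμ := hL μ hμu
  rw [hL0, mul_zero] at hμ
  have hdefect := (mul_eq_zero.1 hμ).resolve_right (mAdd_denom_pos hk ha hμu).ne'
  exact sub_eq_zero.1 hdefect

lemma _root_.Real.continuous_tanh : Continuous Real.tanh := by
  rw [show Real.tanh = fun x ↦ Real.sinh x / Real.cosh x from funext Real.tanh_eq_sinh_div_cosh]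
  exact Real.continuous_sinh.div Real.continuous_cosh fun x ↦ (Real.cosh_pos x).ne'

lemma artanh_eq_real_artanh {y : ℝ} (hy : y ∈ Icc (-1) 1) : artanh y = Real.artanh y :=
  (Real.artanh_eq_half_log hy).symm

lemma tanh_div_smul_mem_disc {k : ℝ} (hk : 0 < k) (y : ℝ) {w : Pt} (hw : w ≠ 0) :
    (tanh y / (√k * ‖w‖)) • w ∈ disc k := by
  have hw' : ‖w‖ ≠ 0 := norm_ne_zero_iff.2 hw
  show k * ‖(tanh y / (√k * ‖w‖)) • w‖ ^ 2 < 1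
  rw [norm_smul, Real.norm_eq_abs, mul_pow, sq_abs, div_pow, mul_pow, Real.sq_sqrt hk.le]
  field_simp
  exact Real.tanh_sq_lt_one y

section Geodesic

variable {k : ℝ} {p x : Pt}

lemma mAdd_neg_mem_disc (hk : 0 ≤ k) (hp : p ∈ disc k) (hx : x ∈ disc k) :
    mAdd k (-p) x ∈ disc k :=
  mAdd_mem_disc hk (neg_mem_disc.2 hp) hx

lemma mAdd_neg_ne_zero (hk : 0 ≤ k) (hp : p ∈ disc k) (hx : x ∈ disc k) (hxp : x ≠ p) :
    mAdd k (-p) x ≠ 0 := fun h ↦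
  hxp (by rw [← mAdd_neg_left_cancel hk hp hx, h, mAdd_zero])

lemma sqrt_mul_norm_mem_Ioo {w : Pt} (hk : 0 < k) (hw : w ∈ disc k) (hw0 : w ≠ 0) :
    √k * ‖w‖ ∈ Ioo 0 1 := by
  refine ⟨by positivity, ?_⟩
  rw [← abs_of_pos (by positivity : 0 < √k * ‖w‖), ← sq_lt_one_iff_abs_lt_one, mul_pow,
    Real.sq_sqrt hk.le]
  exact hw

theorem expMap_smul_logMap (hk : 0 < k) (hp : p ∈ disc k) (hx : x ∈ disc k) (hxp : x ≠ p)
    {t : ℝ} (ht : 0 ≤ t) :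
    expMap k p (t • logMap k p x) = mAdd k p
      ((tanh (t * artanh (√k * ‖mAdd k (-p) x‖)) / (√k * ‖mAdd k (-p) x‖)) • mAdd k (-p) x) := by
  rcases ht.eq_or_lt with rfl | ht
  · simp [expMap, mAdd_zero]
  have hw0 := mAdd_neg_ne_zero hk.le hp hx hxp
  have hkw := sqrt_mul_norm_mem_Ioo hk (mAdd_neg_mem_disc hk.le hp hx) hw0
  set w := mAdd k (-p) x
  have hα : 0 < artanh (√k * ‖w‖) := by
    rw [artanh_eq_real_artanh (Ioo_subset_Icc_self (Ioo_subset_Ioo_left (by norm_num) hkw))]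
    exact Real.artanh_pos hkw
  have hp' : 0 < 1 - k * ‖p‖ ^ 2 := sub_pos.2 hp
  have hlog : logMap k p x = ((1 - k * ‖p‖ ^ 2) / √k * artanh (√k * ‖w‖) / ‖w‖) • w := by
    rw [logMap, if_neg hxp]
  have hnorm : ‖t • logMap k p x‖ = t * ((1 - k * ‖p‖ ^ 2) / √k * artanh (√k * ‖w‖)) := by
    rw [hlog, norm_smul, norm_smul, Real.norm_eq_abs, Real.norm_eq_abs, abs_of_pos ht,
      abs_of_pos (by positivity), div_mul_cancel₀ _ (norm_ne_zero_iff.2 hw0)]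
  have hk' : √k ≠ 0 := by positivity
  have harg : √k * (t * ((1 - k * ‖p‖ ^ 2) / √k * artanh (√k * ‖w‖))) / (1 - k * ‖p‖ ^ 2) =
      t * artanh (√k * ‖w‖) := by
    field_simp
  rw [expMap, if_neg (norm_ne_zero_iff.1 (by rw [hnorm]; positivity)), hnorm, harg, hlog,
    smul_smul, smul_smul]
  congr 2
  field_simp

theorem expMap_smul_logMap_mem_disc (hk : 0 < k) (hp : p ∈ disc k) (hx : x ∈ disc k)
    (hxp : x ≠ p) {t : ℝ} (ht : 0 ≤ t) : expMap k p (t • logMap k p x) ∈ disc k := by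
  rw [expMap_smul_logMap hk hp hx hxp ht]
  exact mAdd_mem_disc hk.le hp (tanh_div_smul_mem_disc hk _ (mAdd_neg_ne_zero hk.le hp hx hxp))

theorem expMap_logMap (hk : 0 < k) (hp : p ∈ disc k) (hx : x ∈ disc k) (hxp : x ≠ p) :
    expMap k p (logMap k p x) = x := by
  have hkw := sqrt_mul_norm_mem_Ioo hk (mAdd_neg_mem_disc hk.le hp hx)
    (mAdd_neg_ne_zero hk.le hp hx hxp)
  have h := expMap_smul_logMap hk hp hx hxp zero_le_one
  rwa [one_smul, one_mul,
    artanh_eq_real_artanh (Ioo_subset_Icc_self (Ioo_subset_Ioo_left (by norm_num) hkw)),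
    Real.tanh_artanh (Ioo_subset_Ioo_left (by norm_num) hkw), div_self hkw.1.ne', one_smul,
    mAdd_neg_left_cancel hk.le hp hx] at h

theorem continuousOn_expMap_smul_logMap (hk : 0 < k) (hp : p ∈ disc k) (hx : x ∈ disc k)
    (hxp : x ≠ p) : ContinuousOn (fun t : ℝ ↦ expMap k p (t • logMap k p x)) (Ici 0) := by
  have hw0 := mAdd_neg_ne_zero hk.le hp hx hxp
  refine ContinuousOn.congr ?_ fun t ht ↦ expMap_smul_logMap hk hp hx hxp ht
  refine (continuousOn_mAdd hk.le hp).comp (Continuous.continuousOn ?_)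
    fun t _ ↦ tanh_div_smul_mem_disc hk _ hw0
  exact ((Real.continuous_tanh.comp (continuous_id.mul continuous_const)).div_const _).smul
    continuous_const

theorem expMap_smul_logMap_mem_orthoCircle {s : ℝ} {c : Pt} (hk : 0 < k) (hks : k * s ^ 2 = 1)
    (hp : p ∈ disc k) (hx : x ∈ disc k) (hxp : x ≠ p) (hpC : p ∈ orthoCircle s c)
    (hxC : x ∈ orthoCircle s c) {t : ℝ} (ht : 0 ≤ t) :
    expMap k p (t • logMap k p x) ∈ orthoCircle s c := by
  rw [expMap_smul_logMap hk hp hx hxp ht]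
  exact mAdd_smul_mem_orthoCircle hk.le hks hp (mAdd_neg_mem_disc hk.le hp hx) hpC
    (by rwa [mAdd_neg_left_cancel hk.le hp hx])
    (tanh_div_smul_mem_disc hk _ (mAdd_neg_ne_zero hk.le hp hx hxp))

theorem exists_expMap_smul_logMap_apply_one_eq_zero (hk : 0 < k) (hp : p ∈ disc k)
    (hx : x ∈ disc k) (hxp : x ≠ p) (hp1 : 0 ≤ p 1) (hx1 : x 1 ≤ 0) :
    ∃ t ∈ Icc (0 : ℝ) 1, expMap k p (t • logMap k p x) 1 = 0 := by
  have hcont : ContinuousOn (fun t : ℝ ↦ expMap k p (t • logMap k p x) 1) (Icc 0 1) :=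
    (PiLp.continuous_apply 2 (fun _ : Fin 2 ↦ ℝ) 1).comp_continuousOn
      ((continuousOn_expMap_smul_logMap hk hp hx hxp).mono Icc_subset_Ici_self)
  refine intermediate_value_Icc' zero_le_one hcont ⟨?_, ?_⟩
  · simpa only [one_smul, expMap_logMap hk hp hx hxp] using hx1
  · simpa [expMap] using hp1

end Geodesic

lemma norm_ptPolar (r φ : ℝ) : ‖ptPolar r φ‖ = |r| := by
  rw [EuclideanSpace.norm_eq, Fin.sum_univ_two]
  simp only [ptPolar, Real.norm_eq_abs, sq_abs, PiLp.toLp_apply, Matrix.cons_val_zero,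
    Matrix.cons_val_one, mul_pow]
  rw [← mul_add, cos_sq_add_sin_sq, mul_one, Real.sqrt_sq_eq_abs]

lemma inner_ptPolar (a b φ ψ : ℝ) :
    ⟪ptPolar a φ, ptPolar b ψ⟫_ℝ = a * b * cos (φ - ψ) := by
  simp [ptPolar, PiLp.inner_apply, Fin.sum_univ_two, cos_sub]
  ring

lemma ptPolar_mem_orthoCircle {r s D φ : ℝ} (h : r ^ 2 + s ^ 2 = 2 * r * D * cos φ) :
    ptPolar r φ ∈ orthoCircle s (ptPolar D 0) := by
  show ‖ptPolar r φ‖ ^ 2 + s ^ 2 = 2 * ⟪ptPolar r φ, ptPolar D 0⟫_ℝ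
  rw [norm_ptPolar, sq_abs, inner_ptPolar, sub_zero]
  linarith

lemma norm_eq_of_mem_orthoCircle_of_apply_one_eq_zero {s D : ℝ} {z : Pt} (hD : 0 < D)
    (hz : z ∈ orthoCircle s (ptPolar D 0)) (hz1 : z 1 = 0) (hzs : ‖z‖ < s) :
    ‖z‖ = D - √(D ^ 2 - s ^ 2) := by
  have hpolar : ∀ b : ℝ, ptPolar b 0 = b • ptPolar 1 0 := by
    intro b; ext i; fin_cases i <;> simp [ptPolar]
  obtain ⟨a, rfl⟩ : ∃ a, z = ptPolar a 0 := ⟨z 0, by ext i; fin_cases i <;> simp [ptPolar, hz1]⟩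
  have hcirc : a ^ 2 + s ^ 2 = 2 * D * a := by
    have hz' : ‖ptPolar a 0‖ ^ 2 + s ^ 2 = 2 * ⟪ptPolar a 0, ptPolar D 0⟫_ℝ := hz
    rw [norm_ptPolar, sq_abs, inner_ptPolar, sub_zero, cos_zero, mul_one] at hz'
    linarith
  have ha : 0 ≤ a := by nlinarith [sq_nonneg a]
  rw [norm_ptPolar, abs_of_nonneg ha] at hzs
  have hDa : 0 ≤ D - a := by nlinarith
  have hray : SameRay ℝ (ptPolar a 0) (ptPolar D 0 - ptPolar a 0) := by
    rw [hpolar a, hpolar D, ← sub_smul]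
    exact (SameRay.sameRay_nonneg_smul_left _ ha).nonneg_smul_right hDa
  rw [norm_eq_of_mem_orthoCircle_of_sameRay hz hray, norm_ptPolar, abs_of_pos hD]

/-- For `P = (r cos(θ/2), r sin(θ/2))` and `Q = (r cos(θ/2), −r sin(θ/2))`
with `0 < r < s` and `0 < θ < π`, the minimum Euclidean distance from the origin to a
point of the geodesic segment joining `P` and `Q` equals `D − √(D² − s²)`, where
`D = (r + s²/r)/(2 cos(θ/2))`. -/
theorem min_dist_origin_geodesic (k : ℝ) (hk : 0 < k) (r θ : ℝ) (hr : 0 < r)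
    (hrs : r < sOf k) (hθ0 : 0 < θ) (hθπ : θ < π) (P Q : Pt)
    (hP : P = ptPolar r (θ / 2)) (hQ : Q = ptPolar r (-(θ / 2)))
    (D : ℝ) (hD : D = (r + (sOf k) ^ 2 / r) / (2 * Real.cos (θ / 2))) :
    IsLeast ((fun t : ℝ => ‖expMap k P (t • logMap k P Q)‖) '' Set.Icc (0 : ℝ) 1)
      (D - Real.sqrt (D ^ 2 - (sOf k) ^ 2)) := by
  have hks : k * sOf k ^ 2 = 1 := by
    rw [sOf, div_pow, one_pow, Real.sq_sqrt hk.le, mul_one_div_cancel hk.ne']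
  have hcos : 0 < cos (θ / 2) := cos_pos_of_mem_Ioo ⟨by linarith, by linarith⟩
  have hsin : 0 < sin (θ / 2) := sin_pos_of_pos_of_lt_pi (by linarith) (by linarith)
  have hD0 : 0 < D := by rw [hD]; positivity
  have hdisc : ∀ φ, ptPolar r φ ∈ disc k := fun φ ↦ by
    rwa [mem_disc_iff_norm_lt hk, norm_ptPolar, abs_of_pos hr]
  have hcirc : ∀ φ, cos φ = cos (θ / 2) → ptPolar r φ ∈ orthoCircle (sOf k) (ptPolar D 0) :=
    fun φ hφ ↦ ptPolar_mem_orthoCircle (by rw [hφ, hD]; field_simp)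
  have hP1 : P 1 = r * sin (θ / 2) := by simp [hP, ptPolar]
  have hQ1 : Q 1 = -(r * sin (θ / 2)) := by simp [hQ, ptPolar]
  have hQP : Q ≠ P := fun h ↦ by
    have := congrArg (fun z : Pt ↦ z 1) h
    simp only [hP1, hQ1] at this
    nlinarith [mul_pos hr hsin]
  have hPd : P ∈ disc k := hP ▸ hdisc _
  have hQd : Q ∈ disc k := hQ ▸ hdisc _
  have hγC : ∀ t ∈ Icc (0 : ℝ) 1,
      expMap k P (t • logMap k P Q) ∈ orthoCircle (sOf k) (ptPolar D 0) :=
    fun t ht ↦ expMap_smul_logMap_mem_orthoCircle hk hks hPd hQd hQP (hP ▸ hcirc _ rfl)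
      (hQ ▸ hcirc _ (cos_neg _)) ht.1
  obtain ⟨t₀, ht₀, hcross⟩ := exists_expMap_smul_logMap_apply_one_eq_zero hk hPd hQd hQP
    (by rw [hP1]; positivity) (by rw [hQ1]; nlinarith [mul_pos hr hsin])
  refine ⟨⟨t₀, ht₀, norm_eq_of_mem_orthoCircle_of_apply_one_eq_zero hD0 (hγC t₀ ht₀) hcross
    ((mem_disc_iff_norm_lt hk).1 (expMap_smul_logMap_mem_disc hk hPd hQd hQP ht₀.1))⟩, ?_⟩
  rintro _ ⟨t, ht, rfl⟩
  simpa [norm_ptPolar, abs_of_pos hD0] using norm_sub_sqrt_le_norm_of_mem_orthoCircle (hγC t ht)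

end HypFL
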